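/- Let k be even, k≥6, m≥1. The set P = {{(i,2j),(i,2j+1)} : 0≤i≤2m+1, 0≤j≤(k/2)−1} is a perfect matching of H_{k,m,c} (in its Klein bottle coordinates), and the contraction H_{k,m,c}/P is isomorphic to K^0_{2m+2,k/2}. -/

import Mathlib

open SimpleGraph

namespace HexPaper

/-- Vertices live in `ℕ × ℕ`. -/
abbrev V2 : Type := ℕ × ℕ

/-- Edge set of the `p × q` grid: `(i,j) ~ (i',j')` iff `|i-i'| + |j-j'| = 1`. -/
def gridE (p q : ℕ) : Set (Sym2 V2) :=
  {e | ∃ a b : V2, a.1 < p ∧ a.2 < q ∧ b.1 < p ∧ b.2 < q ∧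
    ((a.1 = b.1 ∧ b.2 = a.2 + 1) ∨ (a.2 = b.2 ∧ b.1 = a.1 + 1)) ∧ e = s(a, b)}

/-- Vertex set of the `p × q` grid. -/
def gridV (p q : ℕ) : Set V2 := {v | v.1 < p ∧ v.2 < q}

/-- Edge set of the cylinder grid `p × q`: the grid plus the wrap-around edges. -/
def cylGridE (p q : ℕ) : Set (Sym2 V2) :=
  gridE p q ∪ {e | ∃ j, j < p ∧ e = s(((j, 0) : V2), (j, q - 1))}

/-- Edge set of the hexagonal cylinder of length `k` and breadth `m`. -/
def hexCylE (k m : ℕ) : Set (Sym2 V2) :=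
  cylGridE (m + 1) (2 * k) \
    {e | ∃ i j, i ≤ (m - 1) / 2 ∧ j < k ∧
      (e = s(((2 * i, 2 * j) : V2), (2 * i + 1, 2 * j)) ∨
       e = s(((2 * i + 1, 2 * j + 1) : V2), (2 * i + 2, 2 * j + 1)))}

/-- Vertex set of the hexagonal cylinder of length `k` and breadth `m`. -/
def cylV (k m : ℕ) : Set V2 := gridV (m + 1) (2 * k)

/-- The degree-two vertices `z_j` of the hexagonal cylinder. -/
def zC (j : ℕ) : V2 := (0, 2 * j)

/-- The degree-two vertices `x_j` of the hexagonal cylinder of breadth `m`. -/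
def xC (m j : ℕ) : V2 := if m % 2 = 1 then (m, 2 * j) else (m, 2 * j + 1)

/-- Edge set of `H_{k,m,r}`. -/
def HrE (k m r : ℕ) : Set (Sym2 V2) :=
  hexCylE k m ∪ {e | ∃ j, j < k ∧ e = s(zC j, xC m ((j + r) % k))}

/-- Edge set of `H_{k,m,a}`. -/
def HaE (k m : ℕ) : Set (Sym2 V2) :=
  hexCylE k m ∪ {s(zC 0, xC m 1), s(zC 1, xC m 0)} ∪
    {e | ∃ i, 2 ≤ i ∧ i < k ∧ e = s(zC i, xC m ((k + 1 - i) % k))}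

/-- Edge set of `H_{k,m,b}`. -/
def HbE (k m : ℕ) : Set (Sym2 V2) :=
  hexCylE k m ∪ {s(zC 0, xC m 0)} ∪
    {e | ∃ i, 1 ≤ i ∧ i < k ∧ e = s(zC i, xC m ((k - i) % k))}

/-- Edge set of `H_{k,m,c}` (in its Klein-bottle coordinates on the `(2m+2) × k` grid). -/
def HcE (k m : ℕ) : Set (Sym2 V2) :=
  (gridE (2 * m + 2) k \
    {e | ∃ i j, i ≤ m ∧ j < k / 2 ∧
      (e = s(((2 * i, 2 * j + 1) : V2), (2 * i + 1, 2 * j + 1)) ∨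
       e = s(((2 * i + 1, 2 * j) : V2), (2 * i + 2, 2 * j)))}) ∪
  {e | ∃ i, i < k / 2 ∧ e = s(((0, 2 * i + 1) : V2), (2 * m + 1, 2 * i + 1))} ∪
  {e | ∃ i, i ≤ 2 * m + 1 ∧ e = s(((i, 0) : V2), (2 * m + 1 - i, k - 1))}

/-- Vertex set of `H_{k,m,c}`. -/
def HcV (k m : ℕ) : Set V2 := gridV (2 * m + 2) k

/-- Edge set of `H_{k,m,f}` (in its Klein-bottle coordinates on the `(2m+4) × k` grid). -/
def HfE (k m : ℕ) : Set (Sym2 V2) :=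
  (gridE (2 * m + 4) k \
    {e | ∃ i j, i ≤ m + 1 ∧ j < (k - 1) / 2 ∧
      (e = s(((2 * i, 2 * j + 1) : V2), (2 * i + 1, 2 * j + 1)) ∨
       e = s(((2 * i + 1, 2 * j) : V2), (2 * i + 2, 2 * j)))}) ∪
  {e | ∃ i, i < (k - 1) / 2 ∧ e = s(((0, 2 * i + 1) : V2), (2 * m + 3, 2 * i + 1))} ∪
  {s(((0, 0) : V2), ((0, k - 1) : V2))} ∪
  {e | ∃ i, 1 ≤ i ∧ i ≤ 2 * m + 3 ∧ e = s(((i, 0) : V2), (2 * m + 4 - i, k - 1))}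

/-- Vertex set of `H_{k,m,f}`. -/
def HfV (k m : ℕ) : Set V2 := gridV (2 * m + 4) k

/-- Vertex set of the hexagonal ladder of length `k` and breadth `m`:
the `(m+1) × (2k+m)` grid minus `{(j,i) : j ≤ m-2, i ≤ m-2-j}` and
`{(j,2k+i) : 2 ≤ j ≤ m, m+1-j ≤ i ≤ m-1}`. -/
def ladV (k m : ℕ) : Set V2 :=
  {v | v.1 ≤ m ∧ v.2 < 2 * k + m ∧
    ¬(v.1 + 2 ≤ m ∧ v.1 + v.2 + 2 ≤ m) ∧
    ¬(2 ≤ v.1 ∧ 2 * k ≤ v.2 ∧ m + 1 ≤ v.1 + (v.2 - 2 * k) ∧ v.2 - 2 * k + 1 ≤ m)}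

/-- Edge set of the hexagonal ladder of length `k` and breadth `m`. -/
def ladE (k m : ℕ) : Set (Sym2 V2) :=
  gridE (m + 1) (2 * k + m) \
    {e | ∃ i j, i < m ∧ j < k ∧ e = s(((i, m - i + 2 * j) : V2), (i + 1, m - i + 2 * j))}

/-- Vertex set of the twisted hexagonal cylinder `TC_{k,m,1}` (for `k ≤ m-2`). -/
def tc1V (k m : ℕ) : Set V2 := ladV k m ∪ {(0, 2 * k + m), (m - k - 1, 3 * k + 2)}

/-- Edge set of the twisted hexagonal cylinder `TC_{k,m,1}`. -/
def tc1E (k m : ℕ) : Set (Sym2 V2) :=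
  ladE k m ∪
  {s(((0, 2 * k + m) : V2), (0, 2 * k + m - 1)),
   s(((0, 2 * k + m) : V2), (k + 1, m - k - 2)),
   s(((m - k - 1, 3 * k + 2) : V2), (m - k - 1, 3 * k + 1)),
   s(((m - k - 1, 3 * k + 2) : V2), (m, 0))} ∪
  {e | ∃ j, 1 ≤ j ∧ j + k + 2 ≤ m ∧
    e = s(((j, 2 * k + m - j) : V2), (k + j + 1, m - k - j - 2))}

/-- The degree-two vertices `z_j` of `TC_{k,m,1}`, `0 ≤ j ≤ k`. -/
def z1 (k m j : ℕ) : V2 := (0, 2 * k + m - 2 * j)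

/-- The degree-two vertices `x_j` of `TC_{k,m,1}`, `0 ≤ j ≤ k`. -/
def x1 (m j : ℕ) : V2 := (j, m - (j + 1))

/-- The degree-two vertices `v_i` of `TC_{k,m,1}`, `0 ≤ i ≤ k`. -/
def v1 (k m i : ℕ) : V2 :=
  if i = 0 then (m - k - 1, 3 * k + 2) else (m - k + 1, 3 * k - (i - 1))

/-- The degree-two vertices `w_i` of `TC_{k,m,1}`, `0 ≤ i ≤ k`. -/
def w1 (k m i : ℕ) : V2 :=
  if i = 0 then (m, 2 * k) else (m, 2 * k - (2 * (i - 1) + 1))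

/-- Edge set of `H_{k,m,h}`. -/
def HhE (k m : ℕ) : Set (Sym2 V2) :=
  tc1E k m ∪ {e | ∃ i, i ≤ k ∧ e = s(z1 k m i, x1 m i)} ∪
    {e | ∃ i, i < k ∧ e = s(v1 k m i, w1 k m i)}

/-- Vertex set of the twisted hexagonal cylinder `TC_{k,m,2}` (for `k ≥ m+1`):
the hexagonal ladder of length `k` and breadth `m+1` minus the vertices
`(m+1,i)`, `0 ≤ i ≤ 2(k-m)-3` (no vertex deleted when `k = m+1`). -/
def tc2V (k m : ℕ) : Set V2 :=
  ladV k (m + 1) \ {v | v.1 = m + 1 ∧ m + 2 ≤ k ∧ v.2 + 3 ≤ 2 * (k - m)}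

/-- Edge set of the twisted hexagonal cylinder `TC_{k,m,2}`. -/
def tc2E (k m : ℕ) : Set (Sym2 V2) :=
  ladE k (m + 1) ∪ {s(((0, 2 * k + m) : V2), (m + 1, 2 * (k - m - 1)))} ∪
  {e | ∃ j, j + m + 2 ≤ k ∧
    e = s(((0, 2 * k + m - (2 * j + 1)) : V2), (m, 2 * (k - m - 1) - (2 * j + 2)))}

/-- The degree-two vertices `x_i` of `TC_{k,m,2}`, `0 ≤ i ≤ m`. -/
def x2 (m i : ℕ) : V2 := (m - i, i)

/-- The degree-two vertices `z_i` of `TC_{k,m,2}`, `0 ≤ i ≤ m`. -/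
def z2 (m i : ℕ) : V2 := (0, m + 2 * i + 1)

/-- The degree-two vertices `w_i` of `TC_{k,m,2}`, `0 ≤ i ≤ m`. -/
def w2 (k m i : ℕ) : V2 := (i + 1, 2 * k + m - i)

/-- The degree-two vertices `v_i` of `TC_{k,m,2}`, `0 ≤ i ≤ m`. -/
def v2 (k m i : ℕ) : V2 := (m + 1, 2 * k - (2 * i + 1))

/-- Edge set of `H_{k,m,g}`. -/
def HgE (k m : ℕ) : Set (Sym2 V2) :=
  tc2E k m ∪ {e | ∃ i, i ≤ m ∧ (e = s(z2 m i, w2 k m i) ∨ e = s(x2 m i, v2 k m i))}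

/-- The simple graph on the vertex set `Vs` whose edges are the members of `E`
joining two vertices of `Vs`. -/
def mkG (E : Set (Sym2 V2)) (Vs : Set V2) : SimpleGraph ↥Vs :=
  (SimpleGraph.fromEdgeSet E).induce Vs

/-- The hexagonal cylinder of length `k` and breadth `m`, as a graph. -/
def HexCylinder (k m : ℕ) : SimpleGraph ↥(cylV k m) := mkG (hexCylE k m) (cylV k m)

def Hr (k m r : ℕ) : SimpleGraph ↥(cylV k m) := mkG (HrE k m r) (cylV k m)
def Ha (k m : ℕ) : SimpleGraph ↥(cylV k m) := mkG (HaE k m) (cylV k m)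
def Hb (k m : ℕ) : SimpleGraph ↥(cylV k m) := mkG (HbE k m) (cylV k m)
def Hc (k m : ℕ) : SimpleGraph ↥(HcV k m) := mkG (HcE k m) (HcV k m)
def Hf (k m : ℕ) : SimpleGraph ↥(HfV k m) := mkG (HfE k m) (HfV k m)
def Ladder (k m : ℕ) : SimpleGraph ↥(ladV k m) := mkG (ladE k m) (ladV k m)
def TC1 (k m : ℕ) : SimpleGraph ↥(tc1V k m) := mkG (tc1E k m) (tc1V k m)
def TC2 (k m : ℕ) : SimpleGraph ↥(tc2V k m) := mkG (tc2E k m) (tc2V k m)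
def Hg (k m : ℕ) : SimpleGraph ↥(tc2V k m) := mkG (HgE k m) (tc2V k m)
def Hh (k m : ℕ) : SimpleGraph ↥(tc1V k m) := mkG (HhE k m) (tc1V k m)

/-- Edge set of the torus locally grid graph `T^δ_{p,q}`. -/
def TtE (p q δ : ℕ) : Set (Sym2 V2) :=
  gridE p q ∪ {e | ∃ i, i < p ∧ e = s(((i, 0) : V2), ((i + δ) % p, q - 1))} ∪
    {e | ∃ j, j < q ∧ e = s(((0, j) : V2), (p - 1, j))}

/-- Edge set of the Klein bottle locally grid graphs `K^0_{p,q}` (`p` even) and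
`K^1_{p,q}` (`p` odd). -/
def KflipE (p q : ℕ) : Set (Sym2 V2) :=
  gridE p q ∪ {e | ∃ j, j < p ∧ e = s(((j, 0) : V2), (p - j - 1, q - 1))} ∪
    {e | ∃ j, j < q ∧ e = s(((0, j) : V2), (p - 1, j))}

/-- Edge set of the Klein bottle locally grid graph `K^2_{p,q}` (`p` even). -/
def K2E (p q : ℕ) : Set (Sym2 V2) :=
  gridE p q ∪ {e | ∃ j, j < p ∧ e = s(((j, 0) : V2), ((p - j) % p, q - 1))} ∪
    {e | ∃ j, j < q ∧ e = s(((0, j) : V2), (p - 1, j))}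

/-- Edge set of the locally grid graph `S_{p,q}`. -/
def SE (p q : ℕ) : Set (Sym2 V2) :=
  if p ≤ q then
    gridE p q ∪ {e | ∃ j, j < p ∧ e = s(((j, 0) : V2), ((p - j) % p, q - p + j))} ∪
      {e | ∃ i, i < p ∧ e = s(((0, i) : V2), (i, q - 1))} ∪
      {e | ∃ i, p ≤ i ∧ i < q ∧ e = s(((0, i) : V2), (p - 1, i - p))}
  else
    gridE p q ∪ {e | ∃ j, j < q ∧ e = s(((j, 0) : V2), (0, q - 1 - j))} ∪
      {e | ∃ i, i < q ∧ e = s(((p - 1 - i, q - 1) : V2), (p - 1, i))} ∪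
      {e | ∃ i, i < p - q ∧ e = s(((i, q - 1) : V2), (i + q, 0))}

def Tt (p q δ : ℕ) : SimpleGraph ↥(gridV p q) := mkG (TtE p q δ) (gridV p q)
def Kflip (p q : ℕ) : SimpleGraph ↥(gridV p q) := mkG (KflipE p q) (gridV p q)
def K2 (p q : ℕ) : SimpleGraph ↥(gridV p q) := mkG (K2E p q) (gridV p q)
def Sg (p q : ℕ) : SimpleGraph ↥(gridV p q) := mkG (SE p q) (gridV p q)

/-- `s` is the vertex set of a cycle of length `n` in `G`. -/
def IsCycleSetN {V : Type} (G : SimpleGraph V) (n : ℕ) (s : Set V) : Prop :=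
  ∃ (u : V) (w : G.Walk u u), w.IsCycle ∧ w.length = n ∧ ∀ v, v ∈ w.support ↔ v ∈ s

/-- `C` is a collection of `6`-cycles of `G` such that every `2`-path of `G` is
contained in precisely one member of `C`. -/
def IsCellCollection {V : Type} (G : SimpleGraph V) (C : Set (Set V)) : Prop :=
  (∀ s ∈ C, IsCycleSetN G 6 s) ∧
    ∀ x y z : V, G.Adj x y → G.Adj y z → x ≠ z →
      ∃! s, s ∈ C ∧ x ∈ s ∧ y ∈ s ∧ z ∈ s

/-- `G` is a hexagonal tiling: connected, cubic, of girth 6, with a collection of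
6-cycles (cells) such that every 2-path lies in precisely one of them. -/
def IsHexagonalTiling {V : Type} (G : SimpleGraph V) : Prop :=
  G.Connected ∧ (∀ v, (G.neighborSet v).ncard = 3) ∧ G.girth = 6 ∧
    ∃ C : Set (Set V), IsCellCollection G C

/-- The dual of a (locally grid) graph `G`: vertices are the squares (4-cycles)
of `G`, two squares being adjacent iff they share an edge of `G`. -/
def dualG {V : Type} (G : SimpleGraph V) :
    SimpleGraph {s : Set V // IsCycleSetN G 4 s} :=
  SimpleGraph.fromRel fun s t =>
    ∃ x y : V, G.Adj x y ∧ x ∈ s.1 ∧ y ∈ s.1 ∧ x ∈ t.1 ∧ y ∈ t.1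

/-- The graph on the vertex set `Vs ⊆ ℕ × ℕ` (kept as a graph on `ℕ × ℕ`, all
other vertices being isolated) whose edges are the members of `E` joining two
vertices of `Vs`. -/
def ambientG (E : Set (Sym2 V2)) (Vs : Set V2) : SimpleGraph V2 :=
  SimpleGraph.fromEdgeSet {e | e ∈ E ∧ ∀ v ∈ e, v ∈ Vs}

/-- `P` is a perfect matching of the graph `G` with vertex set `Vs`: the members
of `P` are edges of `G` and every vertex of `Vs` lies in exactly one member of `P`. -/
def IsPerfectMatchingOn (G : SimpleGraph V2) (Vs : Set V2) (P : Set (Sym2 V2)) : Prop :=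
  P ⊆ G.edgeSet ∧ ∀ v ∈ Vs, ∃! e, e ∈ P ∧ v ∈ e

/-- The contraction `G/P` of a perfect matching `P` in `G`: the simple graph on the
edges of `P` where `e ≠ f` are adjacent iff some endpoint of `e` is adjacent in `G`
to some endpoint of `f` (parallel edges merged, loops discarded). -/
def contractPM (G : SimpleGraph V2) (P : Set (Sym2 V2)) : SimpleGraph ↥P :=
  SimpleGraph.fromRel fun e f =>
    ∃ a b : V2, a ∈ (e : Sym2 V2) ∧ b ∈ (f : Sym2 V2) ∧ G.Adj a b

/-- The perfect matching `P = {{(i,2j),(i,2j+1)} : 0 ≤ i ≤ 2m+1, 0 ≤ j ≤ k/2-1}`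
of `H_{k,m,c}` in its Klein bottle coordinates. -/
def PKlein (k m : ℕ) : Set (Sym2 V2) :=
  {e | ∃ i j, i ≤ 2 * m + 1 ∧ j < k / 2 ∧ e = s(((i, 2 * j) : V2), (i, 2 * j + 1))}

/-!
Identify the matching edge `{(i,2j),(i,2j+1)}` with the vertex `(i,j)` of the
`(2m+2) × (k/2)` grid. An edge of `H_{k,m,c}` joining two different matching edges is a
horizontal grid edge, a vertical grid edge `(x,c)(x+1,c)` with `x ≡ c mod 2`, an edge
`(0,c)(2m+1,c)` with `c` odd, or a twisted edge `(x,0)(2m+1-x,k-1)`; these project onto the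
horizontal grid edges, the vertical grid edges, the edges `(0,j)(2m+1,j)` and the twisted edges
`(x,0)(2m+1-x,k/2-1)` of `K^0_{2m+2,k/2}` respectively. Conversely every edge of `K^0` lifts:
a vertical one `(x,j)(x+1,j)` through column `2j + x % 2`, since the rows `x` and `x+1` of
`H_{k,m,c}` are joined exactly in the columns of the parity of `x`.
-/

theorem ambientG_adj {E : Set (Sym2 V2)} {Vs : Set V2} {a b : V2} :
    (ambientG E Vs).Adj a b ↔ s(a, b) ∈ E ∧ a ∈ Vs ∧ b ∈ Vs ∧ a ≠ b := by
  simp only [ambientG, fromEdgeSet_adj, Set.mem_ofPred_eq, Sym2.forall_mem_pair, and_assoc]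

theorem mkG_adj {E : Set (Sym2 V2)} {Vs : Set V2} {u v : Vs} :
    (mkG E Vs).Adj u v ↔ s((u : V2), v) ∈ E ∧ (u : V2) ≠ v := by
  rw [mkG, induce_adj, fromEdgeSet_adj]

theorem contractPM_adj {G : SimpleGraph V2} {P : Set (Sym2 V2)} {e f : P} :
    (contractPM G P).Adj e f ↔ e ≠ f ∧ ∃ a ∈ (e : Sym2 V2), ∃ b ∈ (f : Sym2 V2), G.Adj a b := by
  rw [contractPM, fromRel_adj]
  refine and_congr_right fun _ => ⟨?_, fun ⟨a, ha, b, hb, hab⟩ => Or.inl ⟨a, b, ha, hb, hab⟩⟩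
  rintro (⟨a, b, ha, hb, hab⟩ | ⟨b, a, hb, ha, hba⟩)
  exacts [⟨a, ha, b, hb, hab⟩, ⟨a, ha, b, hb, hba.symm⟩]

theorem mk_mem_gridE_iff {p q : ℕ} {a b : V2} :
    s(a, b) ∈ gridE p q ↔ a ∈ gridV p q ∧ b ∈ gridV p q ∧
      (a.1 = b.1 ∧ (b.2 = a.2 + 1 ∨ a.2 = b.2 + 1) ∨
        a.2 = b.2 ∧ (b.1 = a.1 + 1 ∨ a.1 = b.1 + 1)) := by
  constructor
  · rintro ⟨a', b', ha1, ha2, hb1, hb2, hunit, he⟩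
    rcases Sym2.eq_iff.1 he with ⟨rfl, rfl⟩ | ⟨rfl, rfl⟩
    · exact ⟨⟨ha1, ha2⟩, ⟨hb1, hb2⟩, by omega⟩
    · exact ⟨⟨hb1, hb2⟩, ⟨ha1, ha2⟩, by omega⟩
  · rintro ⟨⟨ha1, ha2⟩, ⟨hb1, hb2⟩, ⟨h1, h2 | h2⟩ | ⟨h1, h2 | h2⟩⟩
    · exact ⟨a, b, ha1, ha2, hb1, hb2, Or.inl ⟨h1, h2⟩, rfl⟩
    · exact ⟨b, a, hb1, hb2, ha1, ha2, Or.inl ⟨h1.symm, h2⟩, Sym2.eq_swap⟩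
    · exact ⟨a, b, ha1, ha2, hb1, hb2, Or.inr ⟨h1, h2⟩, rfl⟩
    · exact ⟨b, a, hb1, hb2, ha1, ha2, Or.inr ⟨h1.symm, h2⟩, Sym2.eq_swap⟩

theorem mk_mem_KflipE_iff {p q i j i' j' : ℕ} (hi : i < p) (hj : j < q) (hi' : i' < p)
    (hj' : j' < q) :
    s(((i, j) : V2), (i', j')) ∈ KflipE p q ↔
      (i = i' ∧ (j' = j + 1 ∨ j = j' + 1)) ∨ (j = j' ∧ (i' = i + 1 ∨ i = i' + 1)) ∨
      (i + i' + 1 = p ∧ (j = 0 ∧ j' + 1 = q ∨ j' = 0 ∧ j + 1 = q)) ∨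
      (j = j' ∧ (i = 0 ∧ i' + 1 = p ∨ i' = 0 ∧ i + 1 = p)) := by
  simp only [KflipE, Set.mem_union, Set.mem_ofPred_eq, mk_mem_gridE_iff, gridV, Sym2.eq_iff,
    Prod.mk.injEq]
  constructor
  · rintro ((⟨-, -, h⟩ | ⟨t, ht, h⟩) | ⟨t, ht, h⟩) <;> omega
  · rintro (h | h | h | h)
    · exact Or.inl (Or.inl ⟨⟨hi, hj⟩, ⟨hi', hj'⟩, by omega⟩)
    · exact Or.inl (Or.inl ⟨⟨hi, hj⟩, ⟨hi', hj'⟩, by omega⟩)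
    · rcases h with ⟨h, ⟨rfl, rfl⟩ | ⟨rfl, rfl⟩⟩
      · exact Or.inl (Or.inr ⟨i, hi, by omega⟩)
      · exact Or.inl (Or.inr ⟨i', hi', by omega⟩)
    · exact Or.inr ⟨j, hj, by omega⟩

theorem mk_mem_HcE_iff {k m x y c d : ℕ} (hk : Even k) (hx : x < 2 * m + 2) (hy : y < 2 * m + 2)
    (hc : c < k) (hd : d < k) :
    s(((x, c) : V2), (y, d)) ∈ HcE k m ↔
      (x = y ∧ (d = c + 1 ∨ c = d + 1)) ∨
      (c = d ∧ (y = x + 1 ∧ x % 2 = c % 2 ∨ x = y + 1 ∧ y % 2 = c % 2)) ∨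
      (c = d ∧ c % 2 = 1 ∧ (x = 0 ∧ y = 2 * m + 1 ∨ y = 0 ∧ x = 2 * m + 1)) ∨
      (x + y = 2 * m + 1 ∧ (c = 0 ∧ d + 1 = k ∨ d = 0 ∧ c + 1 = k)) := by
  obtain ⟨r, rfl⟩ := hk
  simp only [HcE, Set.mem_union, Set.mem_sdiff, Set.mem_ofPred_eq, mk_mem_gridE_iff, gridV,
    Sym2.eq_iff, Prod.mk.injEq, not_exists, not_and]
  constructor
  · rintro ((⟨⟨-, -, hunit⟩, hkept⟩ | ⟨t, ht, h⟩) | ⟨t, ht, h⟩)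
    · rcases hunit with ⟨rfl, h⟩ | ⟨rfl, rfl | rfl⟩
      · exact Or.inl ⟨rfl, h⟩
      · refine Or.inr (Or.inl ⟨rfl, Or.inl ⟨rfl, ?_⟩⟩)
        by_contra hpar
        exact hkept (x / 2) (c / 2) (by omega) (by omega) (by omega)
      · refine Or.inr (Or.inl ⟨rfl, Or.inr ⟨rfl, ?_⟩⟩)
        by_contra hpar
        exact hkept (y / 2) (c / 2) (by omega) (by omega) (by omega)
    · refine Or.inr (Or.inr (Or.inl ⟨by omega, by omega, ?_⟩))
      omega
    · exact Or.inr (Or.inr (Or.inr ⟨by omega, by omega⟩))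
  · rintro (h | h | h | ⟨hxy, ⟨rfl, hd'⟩ | ⟨rfl, hc'⟩⟩)
    · exact Or.inl (Or.inl ⟨⟨⟨hx, hc⟩, ⟨hy, hd⟩, by omega⟩, fun _ _ _ _ => by omega⟩)
    · exact Or.inl (Or.inl ⟨⟨⟨hx, hc⟩, ⟨hy, hd⟩, by omega⟩, fun _ _ _ _ => by omega⟩)
    · exact Or.inl (Or.inr ⟨c / 2, by omega, by omega⟩)
    · exact Or.inr ⟨x, by omega, by omega⟩
    · exact Or.inr ⟨y, by omega, by omega⟩

def kleinPair (v : V2) : Sym2 V2 := s((v.1, 2 * v.2), (v.1, 2 * v.2 + 1))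

theorem mem_kleinPair_iff {a v : V2} : a ∈ kleinPair v ↔ a.1 = v.1 ∧ a.2 / 2 = v.2 := by
  rw [kleinPair, Sym2.mem_iff, Prod.ext_iff, Prod.ext_iff]
  omega

theorem kleinPair_injective : Function.Injective kleinPair := fun u v huv =>
  have h := mem_kleinPair_iff.1 (huv ▸ Sym2.mem_mk_left _ _ : ((u.1, 2 * u.2) : V2) ∈ kleinPair v)
  Prod.ext h.1 (by dsimp only at h; omega)

theorem mem_PKlein_iff {k m : ℕ} {e : Sym2 V2} :
    e ∈ PKlein k m ↔ ∃ v ∈ gridV (2 * m + 2) (k / 2), kleinPair v = e := by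
  constructor
  · rintro ⟨i, j, hi, hj, rfl⟩
    exact ⟨(i, j), ⟨by omega, hj⟩, rfl⟩
  · rintro ⟨⟨i, j⟩, ⟨hi, hj⟩, rfl⟩
    exact ⟨i, j, by omega, hj, rfl⟩

theorem exists_adj_kleinPair_iff {k m i j i' j' : ℕ} (hk : Even k) (hi : i < 2 * m + 2)
    (hj : j < k / 2) (hi' : i' < 2 * m + 2) (hj' : j' < k / 2) (hne : ((i, j) : V2) ≠ (i', j')) :
    (∃ a ∈ kleinPair (i, j), ∃ b ∈ kleinPair (i', j'),
        (ambientG (HcE k m) (HcV k m)).Adj a b) ↔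
      s(((i, j) : V2), (i', j')) ∈ KflipE (2 * m + 2) (k / 2) := by
  have hne' : ¬(i = i' ∧ j = j') := fun h => hne (Prod.ext h.1 h.2)
  obtain ⟨q, rfl⟩ := hk.two_dvd
  rw [Nat.mul_div_cancel_left q two_pos] at hj hj' ⊢
  rw [mk_mem_KflipE_iff hi hj hi' hj']
  constructor
  · rintro ⟨⟨x, c⟩, ha, ⟨y, d⟩, hb, hab⟩
    rw [mem_kleinPair_iff] at ha hb
    obtain ⟨hE, ⟨hx, hc⟩, ⟨hy, hd⟩, -⟩ := ambientG_adj.1 hab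
    rw [mk_mem_HcE_iff hk hx hy hc hd] at hE
    dsimp only at ha hb
    rcases hE with ⟨rfl, h⟩ | ⟨rfl, h⟩ | ⟨rfl, -, h⟩ | ⟨hxy, h⟩
    · exact Or.inl ⟨by omega, by omega⟩
    · exact Or.inr (Or.inl ⟨by omega, by omega⟩)
    · exact Or.inr (Or.inr (Or.inr ⟨by omega, by omega⟩))
    · exact Or.inr (Or.inr (Or.inl ⟨by omega, by omega⟩))
  · -- the hole is the right-hand side of `mk_mem_HcE_iff` for the columns `2j + r`, `2j' + r'`
    have lift : ∀ r r', r < 2 → r' < 2 → _ →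
        ∃ a ∈ kleinPair (i, j), ∃ b ∈ kleinPair (i', j'),
          (ambientG (HcE (2 * q) m) (HcV (2 * q) m)).Adj a b := fun r r' hr hr' h =>
      ⟨(i, 2 * j + r), mem_kleinPair_iff.2 ⟨rfl, by dsimp only; omega⟩,
        (i', 2 * j' + r'), mem_kleinPair_iff.2 ⟨rfl, by dsimp only; omega⟩,
        ambientG_adj.2 ⟨(mk_mem_HcE_iff hk hi hi' (by omega) (by omega)).2 h,
          ⟨hi, by omega⟩, ⟨hi', by omega⟩, by simp only [ne_eq, Prod.mk.injEq]; omega⟩⟩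
    rintro (⟨rfl, h | h⟩ | ⟨rfl, h | h⟩ | ⟨hii', h | h⟩ | ⟨rfl, h | h⟩)
    · exact lift 1 0 (by omega) (by omega) (by omega)
    · exact lift 0 1 (by omega) (by omega) (by omega)
    · exact lift (i % 2) (i % 2) (by omega) (by omega) (by omega)
    · exact lift (i' % 2) (i' % 2) (by omega) (by omega) (by omega)
    · exact lift 0 1 (by omega) (by omega) (by omega)
    · exact lift 1 0 (by omega) (by omega) (by omega)
    · exact lift 1 1 (by omega) (by omega) (by omega)
    · exact lift 1 1 (by omega) (by omega) (by omega)

theorem isPerfectMatchingOn_PKlein {k m : ℕ} (hk : Even k) :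
    IsPerfectMatchingOn (ambientG (HcE k m) (HcV k m)) (HcV k m) (PKlein k m) := by
  refine ⟨?_, fun v hv => ⟨kleinPair (v.1, v.2 / 2), ⟨?_, ?_⟩, ?_⟩⟩
  · rintro e ⟨i, j, hi, hj, rfl⟩
    have hc : 2 * j + 1 < k := by obtain ⟨r, rfl⟩ := hk; omega
    show (ambientG _ _).Adj (i, 2 * j) (i, 2 * j + 1)
    exact ambientG_adj.2 ⟨(mk_mem_HcE_iff hk (by omega) (by omega) (by omega) hc).2
      (Or.inl ⟨rfl, Or.inl rfl⟩), ⟨by omega, by omega⟩, ⟨by omega, hc⟩, by simp⟩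
  · obtain ⟨r, rfl⟩ := hk
    exact mem_PKlein_iff.2 ⟨(v.1, v.2 / 2), ⟨hv.1, by have : v.2 < r + r := hv.2; omega⟩, rfl⟩
  · exact mem_kleinPair_iff.2 ⟨rfl, rfl⟩
  · rintro e ⟨he, hve⟩
    obtain ⟨w, -, rfl⟩ := mem_PKlein_iff.1 he
    obtain ⟨h1, h2⟩ := mem_kleinPair_iff.1 hve
    rw [h1, h2]

noncomputable def kleinPairEquiv (k m : ℕ) : gridV (2 * m + 2) (k / 2) ≃ PKlein k m :=
  Equiv.ofBijective (fun v => ⟨kleinPair v, mem_PKlein_iff.2 ⟨v, v.2, rfl⟩⟩)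
    ⟨fun _ _ h => Subtype.ext (kleinPair_injective (congrArg Subtype.val h)),
      fun ⟨_, he⟩ => (mem_PKlein_iff.1 he).elim fun v ⟨hv, hve⟩ => ⟨⟨v, hv⟩, Subtype.ext hve⟩⟩

theorem kleinPairEquiv_adj_iff {k m : ℕ} (hk : Even k) {u v : gridV (2 * m + 2) (k / 2)} :
    (contractPM (ambientG (HcE k m) (HcV k m)) (PKlein k m)).Adj
        (kleinPairEquiv k m u) (kleinPairEquiv k m v) ↔ (Kflip (2 * m + 2) (k / 2)).Adj u v := by
  rw [contractPM_adj, Kflip, mkG_adj, (kleinPairEquiv k m).injective.ne_iff,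
    ← Subtype.coe_ne_coe, and_comm]
  exact and_congr_left fun hne => exists_adj_kleinPair_iff hk u.2.1 u.2.2 v.2.1 v.2.2 hne

theorem Hc_contract_general (k m : ℕ) (hke : Even k) :
    IsPerfectMatchingOn (ambientG (HcE k m) (HcV k m)) (HcV k m) (PKlein k m) ∧
    Nonempty (contractPM (ambientG (HcE k m) (HcV k m)) (PKlein k m) ≃g
      Kflip (2 * m + 2) (k / 2)) :=
  ⟨isPerfectMatchingOn_PKlein hke, ⟨RelIso.symm ⟨kleinPairEquiv k m, kleinPairEquiv_adj_iff hke⟩⟩⟩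

/-- `P` is a perfect matching of `H_{k,m,c}` and `H_{k,m,c}/P ≅ K^0_{2m+2,k/2}`. -/
theorem Hc_contract (k m : ℕ) (hke : Even k) (hk : 6 ≤ k) (hm : 1 ≤ m) :
    IsPerfectMatchingOn (ambientG (HcE k m) (HcV k m)) (HcV k m) (PKlein k m) ∧
    Nonempty (contractPM (ambientG (HcE k m) (HcV k m)) (PKlein k m) ≃g
      Kflip (2 * m + 2) (k / 2)) :=
  Hc_contract_general k m hke

end HexPaper
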